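/- For p, q ∈ [0, π/2], the area of the symmetric difference of the aligned unit rhombi R_p and R_q satisfies the expansion k(p, p+ε) = ε·(sin⁴(p/2) + cos⁴(p/2)) + O(ε²) as ε → 0⁺, where k(p,q) = 8·(sin²(|p−q|/4)/sin(|p−q|/2))·(sin²((p+q)/4)·sin(p/2)·sin(q/2) + cos²((p+q)/4)·cos(p/2)·cos(q/2)). -/

import Mathlib

open Real Filter Asymptotics
open scoped Topology

/-! Since `sin² x / sin 2x = tan x / 2`, the kernel is `k(p, q) = 4 tan(|p - q| / 4) · w(p, q)` with a
smooth weight `w` satisfying `w(p, p) = sin⁴(p/2) + cos⁴(p/2)`. The expansion then follows from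
`tan x = x + O(x³)` and `w(p, p + ε) = w(p, p) + O(ε)`. -/

/-- Area of the symmetric difference of the aligned unit rhombi `R_p` and `R_q`. -/
noncomputable def kRhombus (p q : ℝ) : ℝ :=
  if p = q then 0
  else 8 * (Real.sin (|p - q| / 4) ^ 2 / Real.sin (|p - q| / 2)) *
    (Real.sin ((p + q) / 4) ^ 2 * Real.sin (p / 2) * Real.sin (q / 2) +
      Real.cos ((p + q) / 4) ^ 2 * Real.cos (p / 2) * Real.cos (q / 2))

/-- Valid for every `x`: when `cos x = 0` both sides are `0`, the right one because
`tan x = sin x / 0`. -/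
theorem Real.sin_sq_div_sin_two_mul (x : ℝ) : sin x ^ 2 / sin (2 * x) = tan x / 2 := by
  rw [sin_two_mul, tan_eq_sin_div_cos]
  rcases eq_or_ne (sin x) 0 with hs | hs
  · simp [hs]
  rcases eq_or_ne (cos x) 0 with hc | hc
  · simp [hc]
  field_simp

theorem Real.abs_tan_sub_self_le_of_nonneg {x : ℝ} (h0 : 0 ≤ x) (h1 : x ≤ 1) :
    |tan x - x| ≤ x ^ 3 := by
  rcases h0.eq_or_lt with rfl | hx
  · simp
  have hsin_lt : sin x < x := sin_lt hx
  have hsin_gt : x - x ^ 3 / 6 < sin x := sin_gt_sub_cube hx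
  have hcos_ge : 1 - x ^ 2 / 2 ≤ cos x := one_sub_sq_div_two_le_cos
  have hcos_le : cos x ≤ 1 := cos_le_one x
  have hcos_half : 1 / 2 ≤ cos x := by nlinarith
  have hcos_pos : 0 < cos x := by linarith
  have hdiff : tan x - x = (sin x - x * cos x) / cos x := by
    rw [tan_eq_sin_div_cos]
    field_simp
  rw [hdiff, abs_div, abs_of_pos hcos_pos, div_le_iff₀ hcos_pos, abs_le]
  constructor <;> nlinarith [pow_pos hx 3]

theorem Real.abs_tan_sub_self_le {x : ℝ} (h : |x| ≤ 1) : |tan x - x| ≤ |x| ^ 3 := by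
  rcases le_total 0 x with hx | hx
  · rw [abs_of_nonneg hx] at h ⊢
    exact abs_tan_sub_self_le_of_nonneg hx h
  · rw [abs_of_nonpos hx] at h ⊢
    have := abs_tan_sub_self_le_of_nonneg (neg_nonneg.mpr hx) h
    rwa [tan_neg, neg_sub_neg, abs_sub_comm] at this

theorem Real.tan_sub_self_isBigO : (fun x => tan x - x) =O[𝓝 0] (fun x => x ^ 3) := by
  refine IsBigO.of_bound 1 ?_
  filter_upwards [Metric.closedBall_mem_nhds (0 : ℝ) one_pos] with x hx
  rw [Metric.mem_closedBall, dist_zero_right, Real.norm_eq_abs] at hx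
  simpa [abs_pow] using abs_tan_sub_self_le hx

theorem Real.mul_tan_div_sub_self_isBigO {c : ℝ} (hc : c ≠ 0) :
    (fun x => c * tan (x / c) - x) =O[𝓝 0] (fun x => x ^ 3) := by
  have hdiv : Tendsto (fun x : ℝ => x / c) (𝓝 0) (𝓝 0) := by
    simpa using (tendsto_id (x := 𝓝 (0 : ℝ))).div_const c
  have h := (tan_sub_self_isBigO.comp_tendsto hdiv).const_mul_left c
  have hcube : (fun x : ℝ => (x / c) ^ 3) =O[𝓝 0] (fun x => x ^ 3) :=
    ((isBigO_refl (fun x : ℝ => x ^ 3) _).const_mul_left (c ^ 3)⁻¹).congr_left fun x => by ring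
  refine (h.trans hcube).congr_left fun x => ?_
  simp only [Function.comp_apply]
  field_simp

theorem isBigO_mul_sub_mul_sq {g w : ℝ → ℝ}
    (hg : (fun x => g x - x) =O[𝓝 0] (fun x => x ^ 2)) (hw : DifferentiableAt ℝ w 0) :
    (fun x => g x * w x - x * w 0) =O[𝓝 0] (fun x => x ^ 2) := by
  have hw_sub : (fun x => w x - w 0) =O[𝓝 0] (fun x => x) := by
    simpa using hw.isBigO_sub
  have hw_bdd : w =O[𝓝 0] (fun _ => (1 : ℝ)) := hw.continuousAt.tendsto.isBigO_one ℝ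
  have hg_w : (fun x => (g x - x) * w x) =O[𝓝 0] (fun x => x ^ 2) :=
    (hg.mul hw_bdd).congr_right fun x => mul_one _
  have hid_w : (fun x => x * (w x - w 0)) =O[𝓝 0] (fun x => x ^ 2) :=
    ((isBigO_refl (fun x : ℝ => x) _).mul hw_sub).congr_right fun x => (sq x).symm
  exact (hg_w.add hid_w).congr_left fun x => by ring

noncomputable def rhombusWeight (p q : ℝ) : ℝ :=
  sin ((p + q) / 4) ^ 2 * sin (p / 2) * sin (q / 2) +
    cos ((p + q) / 4) ^ 2 * cos (p / 2) * cos (q / 2)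

theorem rhombusWeight_self (p : ℝ) :
    rhombusWeight p p = sin (p / 2) ^ 4 + cos (p / 2) ^ 4 := by
  rw [rhombusWeight, show (p + p) / 4 = p / 2 by ring]
  ring

theorem kRhombus_eq_tan_mul_rhombusWeight (p q : ℝ) :
    kRhombus p q = 4 * tan (|p - q| / 4) * rhombusWeight p q := by
  rw [kRhombus, rhombusWeight, show |p - q| / 2 = 2 * (|p - q| / 4) by ring,
    sin_sq_div_sin_two_mul]
  split_ifs with h
  · simp [h]
  · ring

theorem rhombus_kernel_expansion_general (p : ℝ) :
    (fun ε : ℝ => kRhombus p (p + ε) -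
        ε * (Real.sin (p / 2) ^ 4 + Real.cos (p / 2) ^ 4))
      =O[nhdsWithin 0 (Set.Ioi 0)] (fun ε : ℝ => ε ^ 2) := by
  set w : ℝ → ℝ := fun ε => rhombusWeight p (p + ε)
  have hw : DifferentiableAt ℝ w 0 := by
    simp only [w, rhombusWeight]
    fun_prop
  have htan : (fun ε : ℝ => 4 * tan (ε / 4) - ε) =O[𝓝 0] (fun ε => ε ^ 2) :=
    (mul_tan_div_sub_self_isBigO four_ne_zero).trans (isLittleO_pow_pow (by norm_num)).isBigO
  have hk : (fun ε => kRhombus p (p + ε)) =ᶠ[𝓝[>] 0] (fun ε => 4 * tan (ε / 4) * w ε) := by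
    filter_upwards [self_mem_nhdsWithin] with ε (hε : 0 < ε)
    rw [kRhombus_eq_tan_mul_rhombusWeight, sub_add_cancel_left, abs_neg, abs_of_pos hε]
  have hw0 : w 0 = sin (p / 2) ^ 4 + cos (p / 2) ^ 4 := by
    simp only [w, add_zero, rhombusWeight_self]
  rw [← hw0]
  refine ((isBigO_mul_sub_mul_sq htan hw).mono nhdsWithin_le_nhds).congr' ?_ EventuallyEq.rfl
  filter_upwards [hk] with ε hε
  rw [hε]

theorem rhombus_kernel_expansion (p : ℝ) (hp : p ∈ Set.Ico (0 : ℝ) (π / 2)) :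
    (fun ε : ℝ => kRhombus p (p + ε) -
        ε * (Real.sin (p / 2) ^ 4 + Real.cos (p / 2) ^ 4))
      =O[nhdsWithin 0 (Set.Ioi 0)] (fun ε : ℝ => ε ^ 2) :=
  rhombus_kernel_expansion_general p
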